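/- Let P be a finite poset with Ch(P) = P, i.e., every principal filter of P is a chain. Suppose P is Γ-colored d-complete via κ : P → Γ with Γ simply laced, and also Γ'-colored d-complete via κ' : P → Γ' with Γ' simply laced. Then there is a bijection γ : Γ → Γ' preserving adjacency in both directions (a graph isomorphism of Dynkin diagrams) such that κ' = γ ∘ κ. In particular, the Γ-colored d-complete structure on such a P with simply laced diagram is unique up to isomorphism. -/

import Mathlib

/-!
Common definitions: Dynkin diagram data, Γ-colored posets, and the coloring
properties EC, NA, AC, ICE2, UCB1, LCB1 from the paper, together with
Γ-colored d-complete and Γ-colored minuscule posets, top trees, slant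
irreducibility, extensions, lower frontier censuses, and full heaps.
-/

universe u v w

variable {Γ : Type u} {P : Type v}

/-- The integers `θ a b` form a Dynkin diagram datum. -/
def DynkinDatum (θ : Γ → Γ → ℤ) : Prop :=
  (∀ a : Γ, θ a a = 2) ∧ (∀ a b : Γ, a ≠ b → θ a b ≤ 0) ∧
    (∀ a b : Γ, a ≠ b → (θ a b = 0 ↔ θ b a = 0))

/-- Colors `a` and `b` are adjacent. -/
def AdjColor (θ : Γ → Γ → ℤ) (a b : Γ) : Prop := θ a b < 0

/-- The Dynkin diagram is simply laced. -/
def SimplyLaced (θ : Γ → Γ → ℤ) : Prop :=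
  ∀ a b : Γ, a ≠ b → θ a b = 0 ∨ θ a b = -1

/-- All closed intervals are finite. -/
def LocallyFinitePoset (α : Type*) [PartialOrder α] : Prop :=
  ∀ x y : α, (Set.Icc x y).Finite

/-- A poset is connected if it cannot be written as a disjoint union of two nonempty
subposets with no comparabilities between them. -/
def ConnectedPoset (α : Type*) [PartialOrder α] : Prop :=
  ∀ S : Set α, S.Nonempty → Sᶜ.Nonempty → ∃ x ∈ S, ∃ y ∈ Sᶜ, x ≤ y ∨ y ≤ x

section
variable [PartialOrder P]

/-- (EC) Elements with equal colors are comparable. -/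
def ColoredEC (κ : P → Γ) : Prop := ∀ x y : P, κ x = κ y → x ≤ y ∨ y ≤ x

/-- (NA) Neighbors have adjacent colors. -/
def ColoredNA (θ : Γ → Γ → ℤ) (κ : P → Γ) : Prop :=
  ∀ x y : P, x ⋖ y → AdjColor θ (κ x) (κ y)

/-- (AC) Elements with adjacent colors are comparable. -/
def ColoredAC (θ : Γ → Γ → ℤ) (κ : P → Γ) : Prop :=
  ∀ x y : P, AdjColor θ (κ x) (κ y) → x ≤ y ∨ y ≤ x

/-- (ICE2) Between consecutive elements of a color `a`, the census of colors
adjacent to `a` is two. -/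
def ColoredICE2 (θ : Γ → Γ → ℤ) (κ : P → Γ) : Prop :=
  ∀ (a : Γ) (x y : P), κ x = a → κ y = a → x < y → (∀ z ∈ Set.Ioo x y, κ z ≠ a) →
    (∑ᶠ z ∈ Set.Ioo x y, -θ (κ z) a) = 2

/-- `U(x,P)`: elements above `x` with color adjacent to that of `x`. -/
def USet (θ : Γ → Γ → ℤ) (κ : P → Γ) (x : P) : Set P :=
  {y : P | x < y ∧ AdjColor θ (κ y) (κ x)}

/-- `L(x,P)`: elements below `x` with color adjacent to that of `x`. -/
def LSet (θ : Γ → Γ → ℤ) (κ : P → Γ) (x : P) : Set P :=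
  {y : P | y < x ∧ AdjColor θ (κ y) (κ x)}

/-- (UCB1) Upper frontier census bound. -/
def ColoredUCB1 (θ : Γ → Γ → ℤ) (κ : P → Γ) : Prop :=
  ∀ x : P, (∀ y : P, κ y = κ x → ¬x < y) →
    (USet θ κ x).Finite ∧ (∑ᶠ y ∈ USet θ κ x, -θ (κ y) (κ x)) ≤ 1

/-- (LCB1) Lower frontier census bound. -/
def ColoredLCB1 (θ : Γ → Γ → ℤ) (κ : P → Γ) : Prop :=
  ∀ x : P, (∀ y : P, κ y = κ x → ¬y < x) →
    (LSet θ κ x).Finite ∧ (∑ᶠ y ∈ LSet θ κ x, -θ (κ y) (κ x)) ≤ 1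

/-- A Γ-colored d-complete poset: locally finite, surjectively colored, and
satisfying EC, NA, AC, ICE2, and UCB1. -/
def GColoredDComplete (θ : Γ → Γ → ℤ) (κ : P → Γ) : Prop :=
  LocallyFinitePoset P ∧ Function.Surjective κ ∧ ColoredEC κ ∧ ColoredNA θ κ ∧
    ColoredAC θ κ ∧ ColoredICE2 θ κ ∧ ColoredUCB1 θ κ

/-- A Γ-colored minuscule poset: Γ-colored d-complete and LCB1. -/
def GColoredMinuscule (θ : Γ → Γ → ℤ) (κ : P → Γ) : Prop :=
  GColoredDComplete θ κ ∧ ColoredLCB1 θ κ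

/-- The top tree: the set of elements maximal in their color class. -/
def TopTree (κ : P → Γ) : Set P := {x : P | ∀ y : P, κ y = κ x → ¬x < y}

/-- `x` is covered by `y` within the subposet `S`. -/
def CoversIn (S : Set P) (x y : P) : Prop :=
  x ∈ S ∧ y ∈ S ∧ x < y ∧ ∀ z ∈ S, x < z → ¬z < y

/-- Slant irreducibility of a Γ-colored d-complete poset. -/
def SlantIrreducible (κ : P → Γ) : Prop :=
  ConnectedPoset P ∧ ∀ x y : P, CoversIn (TopTree κ) x y → ∃ z : P, z ≠ y ∧ κ z = κ y

/-- A saturated chain in a subposet `S`: a chain that is convex in `S`. -/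
def SaturatedChainIn (S C : Set P) : Prop :=
  C ⊆ S ∧ IsChain (· ≤ ·) C ∧ ∀ x ∈ C, ∀ y ∈ C, ∀ z ∈ S, x < z → z < y → z ∈ C

/-- The lower frontier census at the element `y`. -/
noncomputable def LCensus (θ : Γ → Γ → ℤ) (κ : P → Γ) (y : P) : ℤ :=
  ∑ᶠ x ∈ LSet θ κ y, -θ (κ x) (κ y)

/-- A full heap: locally finite, surjectively colored, EC, NA, AC, ICE2, and every
color class order-isomorphic to ℤ. -/
def FullHeap (θ : Γ → Γ → ℤ) (κ : P → Γ) : Prop :=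
  LocallyFinitePoset P ∧ Function.Surjective κ ∧ ColoredEC κ ∧ ColoredNA θ κ ∧
    ColoredAC θ κ ∧ ColoredICE2 θ κ ∧ ∀ a : Γ, Nonempty ({x : P // κ x = a} ≃o ℤ)

end

/-- `ι` realizes the colored poset `A` as an order filter of the colored poset `B`. -/
def FilterEmbedding {G : Type*} {A B : Type*} [PartialOrder A] [PartialOrder B]
    (κ : A → G) (κ' : B → G) (ι : A → B) : Prop :=
  (∀ p q : A, ι p ≤ ι q ↔ p ≤ q) ∧ (∀ p : A, κ' (ι p) = κ p) ∧ IsUpperSet (Set.range ι)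

/-- `B` is an extension of `A` by the color `a`, with extending element `x`. -/
def IsExtensionBy {G : Type*} {A B : Type*} [PartialOrder A] [PartialOrder B]
    (θ : G → G → ℤ) (κ : A → G) (κ' : B → G) (a : G) (ι : A → B) (x : B) : Prop :=
  Finite B ∧ GColoredDComplete θ κ' ∧ ConnectedPoset B ∧
    FilterEmbedding κ κ' ι ∧ (Set.range ι)ᶜ = {x} ∧ κ' x = a

/-! When every principal filter is a chain, a simply laced d-complete coloring is injective.
Choose a pair `u < v` of consecutive elements of one color such that no element above `v`
repeats a color of `[u, v]`. By (ICE2) exactly two elements of `(u, v)` have a color adjacent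
to `κ v`: the cover `c` of `u` and the element `d` covered by `v`. By (UCB1) the color of `c`
recurs above `c`, and the only place it can recur is `d`; then `c < d` is a pair of the same
kind in a strictly smaller interval, which is absurd. An injective coloring identifies the
Dynkin diagram with the Hasse diagram of `P`. -/

section DComplete

variable [PartialOrder P] {θ : Γ → Γ → ℤ} {κ : P → Γ}

theorem AdjColor.symm (hθ : DynkinDatum θ) {a b : Γ} (h : AdjColor θ a b) :
    AdjColor θ b a := by
  obtain ⟨-, hle, hzero⟩ := hθ
  by_cases hab : a = b
  · exact hab ▸ h
  · exact (hle b a (Ne.symm hab)).lt_of_ne fun h0 => h.ne ((hzero a b hab).2 h0)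

theorem AdjColor.ne (hθ : DynkinDatum θ) {a b : Γ} (h : AdjColor θ a b) : a ≠ b := by
  rintro rfl
  have := hθ.1 a
  unfold AdjColor at h
  omega

theorem exists_covBy_mem_Ioo {x t : P} (hfin : (Set.Ioo x t).Finite)
    (hne : (Set.Ioo x t).Nonempty) : ∃ m ∈ Set.Ioo x t, x ⋖ m := by
  obtain ⟨m, hm, hmin⟩ := hfin.exists_minimal hne
  exact ⟨m, hm, hm.1, fun z hxz hzm => (hmin ⟨hxz, hzm.trans hm.2⟩ hzm.le).not_gt hzm⟩

theorem exists_mem_Ioo_covBy {x t : P} (hfin : (Set.Ioo x t).Finite)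
    (hne : (Set.Ioo x t).Nonempty) : ∃ m ∈ Set.Ioo x t, m ⋖ t := by
  obtain ⟨m, hm, hmax⟩ := hfin.exists_maximal hne
  exact ⟨m, hm, hm.2, fun z hmz hzt => (hmax ⟨hm.1.trans hmz, hzt⟩ hmz.le).not_gt hmz⟩

theorem le_of_lt_of_lt_of_chain_Ici (hch : ∀ x : P, IsChain (· ≤ ·) (Set.Ici x))
    {x y z : P} (hxy : x < y) (hxz : x < z) (hzy : ¬y < z) : z ≤ y := by
  rcases (hch x).total (Set.mem_Ici.2 hxy.le) (Set.mem_Ici.2 hxz.le) with h | h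
  · exact (h.eq_or_lt.resolve_right hzy).ge
  · exact h

theorem CovBy.le_of_lt_of_chain_Ici (hch : ∀ x : P, IsChain (· ≤ ·) (Set.Ici x))
    {x m z : P} (hxm : x ⋖ m) (hxz : x < z) : m ≤ z :=
  le_of_lt_of_lt_of_chain_Ici hch hxz hxm.1 fun hzm => hxm.2 hxz hzm

theorem CovBy.le_of_mem_Ioo_of_chain_Ici (hch : ∀ x : P, IsChain (· ≤ ·) (Set.Ici x))
    {x m t z : P} (hmt : m ⋖ t) (hxm : x < m) (hz : z ∈ Set.Ioo x t) : z ≤ m :=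
  le_of_lt_of_lt_of_chain_Ici hch hxm hz.1 fun hmz => hmt.2 hmz hz.2

theorem uSet_subsingleton (hU : ColoredUCB1 θ κ) {x : P}
    (hx : ∀ y : P, κ y = κ x → ¬x < y) : (USet θ κ x).Subsingleton := by
  obtain ⟨hfin, hsum⟩ := hU x hx
  rw [finsum_mem_eq_finite_toFinset_sum _ hfin] at hsum
  have hcard : (hfin.toFinset.card : ℤ) ≤ 1 := by
    refine le_trans ?_ hsum
    rw [Finset.card_eq_sum_ones, Nat.cast_sum, Nat.cast_one]
    refine Finset.sum_le_sum fun y hy => ?_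
    have := (hfin.mem_toFinset.mp hy).2
    unfold AdjColor at this
    omega
  intro y hy z hz
  exact Finset.card_le_one.mp (by exact_mod_cast hcard) y (hfin.mem_toFinset.mpr hy) z
    (hfin.mem_toFinset.mpr hz)

theorem covBy_of_adjColor (hθ : DynkinDatum θ) (hNA : ColoredNA θ κ) (hU : ColoredUCB1 θ κ)
    {p q : P} (hfin : (Set.Ioo p q).Finite) (hp : ∀ y : P, κ y = κ p → ¬p < y) (hpq : p < q)
    (hadj : AdjColor θ (κ q) (κ p)) : p ⋖ q := by
  refine ⟨hpq, fun z hpz hzq => ?_⟩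
  obtain ⟨m, hm, hpm⟩ := exists_covBy_mem_Ioo hfin ⟨z, hpz, hzq⟩
  exact hm.2.ne (uSet_subsingleton hU hp ⟨hm.1, (hNA p m hpm).symm hθ⟩ ⟨hpq, hadj⟩)

theorem ncard_adjColor_Ioo_eq_two (hsl : SimplyLaced θ) (hICE : ColoredICE2 θ κ) {u v : P}
    (hfin : (Set.Ioo u v).Finite) (huv : u < v) (hcol : κ u = κ v)
    (hcons : ∀ z ∈ Set.Ioo u v, κ z ≠ κ v) :
    {z ∈ Set.Ioo u v | AdjColor θ (κ z) (κ v)}.ncard = 2 := by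
  classical
  have hterm : ∀ z ∈ Set.Ioo u v,
      -θ (κ z) (κ v) = if AdjColor θ (κ z) (κ v) then 1 else 0 := by
    intro z hz
    unfold AdjColor
    rcases hsl _ _ (hcons z hz) with h | h <;> simp [h]
  have hsum := hICE (κ v) u v hcol rfl huv hcons
  rw [finsum_mem_congr rfl hterm, finsum_mem_eq_finite_toFinset_sum _ hfin,
    Finset.sum_boole] at hsum
  have hset : {z ∈ Set.Ioo u v | AdjColor θ (κ z) (κ v)} =
      ↑(hfin.toFinset.filter fun z => AdjColor θ (κ z) (κ v)) := by
    ext z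
    simp
  rw [hset, Set.ncard_coe_finset]
  exact_mod_cast hsum

theorem exists_adjColor_Ioo_eq_pair (hθ : DynkinDatum θ) (hsl : SimplyLaced θ)
    (hdc : GColoredDComplete θ κ) (hch : ∀ x : P, IsChain (· ≤ ·) (Set.Ici x)) {u v : P}
    (huv : u < v) (hcol : κ u = κ v) (hcons : ∀ z ∈ Set.Ioo u v, κ z ≠ κ v) :
    ∃ c d, u ⋖ c ∧ d ⋖ v ∧ c < d ∧
      {z ∈ Set.Ioo u v | AdjColor θ (κ z) (κ v)} = {c, d} := by
  obtain ⟨hlf, -, -, hNA, -, hICE, -⟩ := hdc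
  have hfin : (Set.Ioo u v).Finite := (hlf u v).subset Set.Ioo_subset_Icc_self
  have hcard := ncard_adjColor_Ioo_eq_two hsl hICE hfin huv hcol hcons
  have hne : (Set.Ioo u v).Nonempty :=
    (Set.nonempty_of_ncard_ne_zero (by rw [hcard]; norm_num)).mono (Set.sep_subset _ _)
  obtain ⟨c, hc, huc⟩ := exists_covBy_mem_Ioo hfin hne
  obtain ⟨d, hd, hdv⟩ := exists_mem_Ioo_covBy hfin hne
  have hcS : c ∈ {z ∈ Set.Ioo u v | AdjColor θ (κ z) (κ v)} := ⟨hc, hcol ▸ (hNA u c huc).symm hθ⟩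
  have hdS : d ∈ {z ∈ Set.Ioo u v | AdjColor θ (κ z) (κ v)} := ⟨hd, hNA d v hdv⟩
  have hcd : c ≠ d := by
    rintro rfl
    have hsub : {z ∈ Set.Ioo u v | AdjColor θ (κ z) (κ v)} ⊆ {c} := fun z hz =>
      le_antisymm (hdv.le_of_mem_Ioo_of_chain_Ici hch hc.1 hz.1) (huc.le_of_lt_of_chain_Ici hch hz.1.1)
    have := Set.ncard_le_ncard hsub
    rw [hcard, Set.ncard_singleton] at this
    omega
  refine ⟨c, d, huc, hdv, (huc.le_of_lt_of_chain_Ici hch hd.1).lt_of_ne hcd, ?_⟩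
  refine (Set.eq_of_subset_of_ncard_le (Set.insert_subset hcS (Set.singleton_subset_iff.2 hdS))
    ?_ (hfin.subset (Set.sep_subset _ _))).symm
  rw [hcard, Set.ncard_pair hcd]

structure IsTopColorPair (κ : P → Γ) (u v : P) : Prop where
  lt : u < v
  color_eq : κ u = κ v
  consecutive : ∀ z ∈ Set.Ioo u v, κ z ≠ κ v
  top : ∀ w, v < w → ∀ z ∈ Set.Icc u v, κ w ≠ κ z

/-- By (UCB1) the color of `c` recurs above `c`; the recurrence lies below `v` by `top`, so it
is `d`, the only other element of `(u, v)` of color adjacent to `κ v`. -/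
theorem IsTopColorPair.color_eq_of_adjColor_Ioo_eq_pair (hθ : DynkinDatum θ)
    (hdc : GColoredDComplete θ κ) (hch : ∀ x : P, IsChain (· ≤ ·) (Set.Ici x)) {u v c d : P}
    (h : IsTopColorPair κ u v) (hcd : c < d)
    (hS : {z ∈ Set.Ioo u v | AdjColor θ (κ z) (κ v)} = {c, d}) : κ d = κ c := by
  obtain ⟨hlf, -, -, hNA, -, -, hU⟩ := hdc
  have hcS : c ∈ {z ∈ Set.Ioo u v | AdjColor θ (κ z) (κ v)} := hS ▸ Set.mem_insert c {d}
  have hdS : d ∈ {z ∈ Set.Ioo u v | AdjColor θ (κ z) (κ v)} := hS ▸ Set.mem_insert_of_mem c rfl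
  obtain ⟨w, hw, hcw⟩ : ∃ w, κ w = κ c ∧ c < w := by
    by_contra! hmax
    have hcv : c ⋖ v := covBy_of_adjColor hθ hNA hU ((hlf c v).subset Set.Ioo_subset_Icc_self)
      hmax hcS.1.2 (hcS.2.symm hθ)
    exact hcv.2 hcd hdS.1.2
  have hvw : ¬v < w := fun hvw => h.top w hvw c (Set.Ioo_subset_Icc_self hcS.1) hw
  have hwv : w < v := by
    refine (le_of_lt_of_lt_of_chain_Ici hch h.lt (hcS.1.1.trans hcw) hvw).lt_of_ne ?_
    rintro rfl
    exact hcS.2.ne hθ hw.symm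
  have hwS : w ∈ {z ∈ Set.Ioo u v | AdjColor θ (κ z) (κ v)} :=
    ⟨⟨hcS.1.1.trans hcw, hwv⟩, hw ▸ hcS.2⟩
  rw [hS] at hwS
  rcases hwS with rfl | rfl
  · exact absurd hcw (lt_irrefl w)
  · exact hw

theorem IsTopColorPair.exists_ssubset (hθ : DynkinDatum θ) (hsl : SimplyLaced θ)
    (hdc : GColoredDComplete θ κ) (hch : ∀ x : P, IsChain (· ≤ ·) (Set.Ici x)) {u v : P}
    (h : IsTopColorPair κ u v) : ∃ c d, IsTopColorPair κ c d ∧ Set.Icc c d ⊂ Set.Icc u v := by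
  obtain ⟨c, d, huc, hdv, hcd, hS⟩ :=
    exists_adjColor_Ioo_eq_pair hθ hsl hdc hch h.lt h.color_eq h.consecutive
  have hdc' : κ d = κ c := h.color_eq_of_adjColor_Ioo_eq_pair hθ hdc hch hcd hS
  have hmem : ∀ z ∈ Set.Icc c d, z ∈ Set.Ioo u v := fun z hz =>
    ⟨huc.1.trans_le hz.1, hz.2.trans_lt hdv.1⟩
  refine ⟨c, d, ⟨hcd, hdc'.symm, fun z hz hzd => ?_, fun w hdw z hz hwz => ?_⟩,
    Set.Icc_ssubset_Icc_left h.lt.le huc.1 hdv.1.le⟩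
  · have hcS : c ∈ {z ∈ Set.Ioo u v | AdjColor θ (κ z) (κ v)} := hS ▸ Set.mem_insert c {d}
    have hzS : z ∈ {z ∈ Set.Ioo u v | AdjColor θ (κ z) (κ v)} :=
      ⟨hmem z (Set.Ioo_subset_Icc_self hz), by rw [hzd, hdc']; exact hcS.2⟩
    rw [hS] at hzS
    rcases hzS with rfl | rfl
    · exact hz.1.ne rfl
    · exact hz.2.ne rfl
  · have hwv : ¬w < v := fun hwv =>
      (hdv.le_of_mem_Ioo_of_chain_Ici hch (huc.1.trans hcd) ⟨huc.1.trans (hcd.trans hdw), hwv⟩).not_gt hdw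
    rcases (le_of_lt_of_lt_of_chain_Ici hch (huc.1.trans (hcd.trans hdw)) h.lt hwv).eq_or_lt with
      rfl | hvw
    · exact h.consecutive z (hmem z hz) hwz.symm
    · exact h.top w hvw z (Set.Ioo_subset_Icc_self (hmem z hz)) hwz

theorem not_isTopColorPair (hθ : DynkinDatum θ) (hsl : SimplyLaced θ)
    (hdc : GColoredDComplete θ κ) (hch : ∀ x : P, IsChain (· ≤ ·) (Set.Ici x)) (u v : P) :
    ¬IsTopColorPair κ u v := by
  intro h
  induction hn : (Set.Icc u v).ncard using Nat.strong_induction_on generalizing u v with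
  | _ n ih =>
    obtain ⟨c, d, hcd, hsub⟩ := h.exists_ssubset hθ hsl hdc hch
    exact ih _ (hn ▸ Set.ncard_lt_ncard hsub (hdc.1 u v)) c d hcd rfl

theorem exists_isTopColorPair [Finite P] {x y : P} (hxy : x < y) (hcol : κ x = κ y) :
    ∃ u v, IsTopColorPair κ u v := by
  obtain ⟨v, ⟨u₀, hu₀v, hu₀⟩, hvmax⟩ :=
    (Set.toFinite {t : P | ∃ s, s < t ∧ κ s = κ t}).exists_maximal ⟨y, x, hxy, hcol⟩
  obtain ⟨u, ⟨huv, hu⟩, humax⟩ :=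
    (Set.toFinite {s : P | s < v ∧ κ s = κ v}).exists_maximal ⟨u₀, hu₀v, hu₀⟩
  refine ⟨u, v, huv, hu, fun z hz hzv => ?_, fun w hvw z hz hwz => ?_⟩
  · exact hz.1.not_ge (humax ⟨hz.2, hzv⟩ hz.1.le)
  · exact hvw.not_ge (hvmax ⟨z, hz.2.trans_lt hvw, hwz.symm⟩ hvw.le)

theorem injective_of_chain_Ici [Finite P] (hθ : DynkinDatum θ) (hsl : SimplyLaced θ)
    (hdc : GColoredDComplete θ κ) (hch : ∀ x : P, IsChain (· ≤ ·) (Set.Ici x)) :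
    Function.Injective κ := by
  intro x y hxy
  by_contra hne
  obtain ⟨u, v, huv⟩ : ∃ u v, IsTopColorPair κ u v := by
    rcases hdc.2.2.1 x y hxy with h | h
    · exact exists_isTopColorPair (h.lt_of_ne hne) hxy
    · exact exists_isTopColorPair (h.lt_of_ne (Ne.symm hne)) hxy.symm
  exact not_isTopColorPair hθ hsl hdc hch u v huv

theorem adjColor_iff_covBy_or_covBy (hθ : DynkinDatum θ) (hdc : GColoredDComplete θ κ)
    (hinj : Function.Injective κ) {x y : P} :
    AdjColor θ (κ x) (κ y) ↔ x ⋖ y ∨ y ⋖ x := by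
  obtain ⟨hlf, -, -, hNA, hAC, -, hU⟩ := hdc
  have hcov : ∀ p q : P, p < q → AdjColor θ (κ q) (κ p) → p ⋖ q := fun p q hpq hadj =>
    covBy_of_adjColor hθ hNA hU ((hlf p q).subset Set.Ioo_subset_Icc_self)
      (fun r hr hpr => hpr.ne' (hinj hr)) hpq hadj
  refine ⟨fun h => ?_, ?_⟩
  · have hne : x ≠ y := fun hxy => h.ne hθ (congrArg κ hxy)
    rcases hAC x y h with hxy | hyx
    · exact .inl (hcov x y (hxy.lt_of_ne hne) (h.symm hθ))
    · exact .inr (hcov y x (hyx.lt_of_ne (Ne.symm hne)) h)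
  · rintro (h | h)
    · exact hNA x y h
    · exact (hNA y x h).symm hθ

end DComplete

theorem dComplete_structure_unique_general {Δ : Type w}
    [PartialOrder P] [Fintype P]
    (hch : ∀ x : P, IsChain (· ≤ ·) (Set.Ici x))
    (θ : Γ → Γ → ℤ) (κ : P → Γ) (θ' : Δ → Δ → ℤ) (κ' : P → Δ)
    (hθ : DynkinDatum θ) (hθ' : DynkinDatum θ')
    (hsl : SimplyLaced θ) (hsl' : SimplyLaced θ')
    (hdc : GColoredDComplete θ κ) (hdc' : GColoredDComplete θ' κ') :
    ∃ γ : Γ → Δ, Function.Bijective γ ∧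
      (∀ a b : Γ, AdjColor θ a b ↔ AdjColor θ' (γ a) (γ b)) ∧ κ' = γ ∘ κ := by
  have hκ : Function.Bijective κ := ⟨injective_of_chain_Ici hθ hsl hdc hch, hdc.2.1⟩
  have hκ' : Function.Bijective κ' := ⟨injective_of_chain_Ici hθ' hsl' hdc' hch, hdc'.2.1⟩
  let e := Equiv.ofBijective κ hκ
  refine ⟨κ' ∘ e.symm, hκ'.comp e.symm.bijective, fun a b => ?_, ?_⟩
  · calc AdjColor θ a b ↔ AdjColor θ (κ (e.symm a)) (κ (e.symm b)) := by
          simp only [e, Equiv.ofBijective_apply_symm_apply]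
      _ ↔ _ := (adjColor_iff_covBy_or_covBy hθ hdc hκ.1).trans
          (adjColor_iff_covBy_or_covBy hθ' hdc' hκ'.1).symm
  · funext x
    simp only [Function.comp_apply, e, Equiv.ofBijective_symm_apply_apply]

/-- A finite poset all of whose principal filters are chains carries at
most one simply laced Γ-colored d-complete structure, up to isomorphism of Dynkin
diagrams compatible with the colorings. -/
theorem dComplete_structure_unique {Δ : Type w} [Fintype Γ] [Fintype Δ]
    [PartialOrder P] [Fintype P] [Nonempty P]
    (hch : ∀ x : P, IsChain (· ≤ ·) (Set.Ici x))
    (θ : Γ → Γ → ℤ) (κ : P → Γ) (θ' : Δ → Δ → ℤ) (κ' : P → Δ)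
    (hθ : DynkinDatum θ) (hθ' : DynkinDatum θ')
    (hsl : SimplyLaced θ) (hsl' : SimplyLaced θ')
    (hdc : GColoredDComplete θ κ) (hdc' : GColoredDComplete θ' κ') :
    ∃ γ : Γ → Δ, Function.Bijective γ ∧
      (∀ a b : Γ, AdjColor θ a b ↔ AdjColor θ' (γ a) (γ b)) ∧ κ' = γ ∘ κ :=
  dComplete_structure_unique_general hch θ κ θ' κ' hθ hθ' hsl hsl' hdc hdc'
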